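/- arXiv:1202.5484 — 2 statements merged into one kernel-verified Lean document; each statement's English description precedes it below -/
import Mathlib

section
/- Let G be a finitely generated Abelian group, let S ⊆ G be a symmetric finite generating set, and equip G/tors G with the ℓ²-norm ‖·‖₂ induced by a chosen isomorphism G/tors G ≅ ℤ^{rk G}. Let s ∈ S \ tors G be an element maximizing ‖π_G(·)‖₂ among elements of S. Then every quasi-algebraic line of quasi-type π_G(s) in Cay(G,S) is a quasi-convex geodesic line. -/
/-- The Cayley graph of an (additive) group `G` with respect to a subset `S`:
vertices are elements of `G`, and `g`, `h` are adjacent iff `h - g ∈ (S ∪ -S) \ {0}`. -/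
def cayley {G : Type*} [AddCommGroup G] (S : Set G) : SimpleGraph G where
  Adj g h := g ≠ h ∧ (h - g ∈ S ∨ g - h ∈ S)
  symm := ⟨fun _ _ hadj => ⟨hadj.1.symm, hadj.2.symm⟩⟩
  loopless := ⟨fun _ hadj => hadj.1 rfl⟩

/-- `p 0, p 1, …, p n` is a geodesic segment in `Γ`: a path whose length realizes
the distance between its endpoints. -/
def IsGeodesicSegment {V : Type*} (Γ : SimpleGraph V) (n : ℕ) (p : ℕ → V) : Prop :=
  (∀ i < n, Γ.Adj (p i) (p (i + 1))) ∧ Γ.dist (p 0) (p n) = n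

/-- A geodesic line in `Γ`. -/
def IsGeodesicLine {V : Type*} (Γ : SimpleGraph V) (γ : ℤ → V) : Prop :=
  ∀ j k : ℤ, Γ.dist (γ j) (γ k) = (j - k).natAbs

/-- A convex geodesic line: a geodesic line such that for all `n ≤ m` the only geodesic
segment from `γ n` to `γ m` is `(γ n, γ (n+1), …, γ m)`. -/
def IsConvexGeodesicLine {V : Type*} (Γ : SimpleGraph V) (γ : ℤ → V) : Prop :=
  IsGeodesicLine Γ γ ∧
    ∀ n m : ℤ, n ≤ m → ∀ (k : ℕ) (p : ℕ → V),
      IsGeodesicSegment Γ k p → p 0 = γ n → p k = γ m →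
        ∀ j ≤ k, p j = γ (n + j)

/-- A quasi-convex geodesic line: a geodesic line such that geodesic segments joining
points `c`-close to the line stay uniformly `C`-close to it (fellow-traveller style). -/
def IsQuasiConvexGeodesicLine {V : Type*} (Γ : SimpleGraph V) (γ : ℤ → V) : Prop :=
  IsGeodesicLine Γ γ ∧
    ∀ c : ℕ, ∃ C : ℕ, ∀ n m : ℤ, n ≤ m → ∀ x y : V,
      Γ.dist x (γ n) ≤ c → Γ.dist y (γ m) ≤ c →
        ∀ p : ℕ → V, IsGeodesicSegment Γ (Γ.dist x y) p →
          p 0 = x → p (Γ.dist x y) = y →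
            ∀ j ≤ Γ.dist x y, Γ.dist (p j) (γ (n + j)) ≤ C

/-- A quasi-algebraic line of quasi-type `t ∈ G/tors G` in `Cay(G,S)`: a ℤ-path in the
Cayley graph all of whose steps project to `t` in `G/tors G`. -/
def IsQuasiAlgebraicLine {G : Type*} [AddCommGroup G] (S : Set G)
    (t : G ⧸ AddCommGroup.torsion G) (γ : ℤ → G) : Prop :=
  (∀ n : ℤ, (cayley S).Adj (γ n) (γ (n + 1))) ∧
    ∀ n : ℤ, QuotientAddGroup.mk' (AddCommGroup.torsion G) (γ (n + 1) - γ n) = t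

/-!
Pair the projection `G → G/tors G ≅ ℤ^d` with `v := e(π s)`: this gives a homomorphism
`φ : G →+ ℤ`, `φ g = ⟨e(π g), v⟩`. Since `s` maximises the norm, expanding `‖e(π t) - v‖² ≥ 0`
shows `φ t ≤ ‖v‖² = φ s` for every generator `t` (and its inverse), with equality only when
`π t = π s`. So `φ` is `φ s`-Lipschitz on the Cayley graph and grows by exactly `φ s` along every
step of `γ`, which makes `γ` a geodesic. A geodesic segment between points `c`-close to `γ` can
only afford `4 c φ s` steps with `φ`-increment below `φ s`; every other step agrees with `s`, hence
with the corresponding step of `γ`, up to the finite torsion subgroup. This keeps the segment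
within bounded distance of `γ`.
-/

open Finset

section DotProduct

variable {R ι : Type*} [CommRing R] [Fintype ι]

theorem sub_dotProduct_sub_self (a v : ι → R) :
    (a - v) ⬝ᵥ (a - v) = a ⬝ᵥ a - 2 * (a ⬝ᵥ v) + v ⬝ᵥ v := by
  simp only [sub_dotProduct, dotProduct_sub, dotProduct_comm v a]
  ring

variable [LinearOrder R] [IsStrictOrderedRing R]

theorem dotProduct_self_nonneg (v : ι → R) : 0 ≤ v ⬝ᵥ v :=
  sum_nonneg fun i _ => mul_self_nonneg (v i)

theorem dotProduct_le_dotProduct_self {a v : ι → R} (h : a ⬝ᵥ a ≤ v ⬝ᵥ v) :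
    a ⬝ᵥ v ≤ v ⬝ᵥ v := by
  linarith [sub_dotProduct_sub_self a v, dotProduct_self_nonneg (a - v)]

theorem eq_of_dotProduct_eq_dotProduct_self {a v : ι → R} (h : a ⬝ᵥ a ≤ v ⬝ᵥ v)
    (heq : a ⬝ᵥ v = v ⬝ᵥ v) : a = v := by
  have hzero : (a - v) ⬝ᵥ (a - v) = 0 :=
    le_antisymm (by linarith [sub_dotProduct_sub_self a v]) (dotProduct_self_nonneg _)
  exact sub_eq_zero.mp (dotProduct_self_eq_zero.mp hzero)

end DotProduct

instance AddCommGroup.finite_torsion (G : Type*) [AddCommGroup G] [AddGroup.FG G] :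
    Finite (AddCommGroup.torsion G) := by
  have : Module.Finite ℤ G := Module.Finite.iff_addGroup_fg.mpr ‹_›
  have : AddGroup.FG (AddCommGroup.torsion G) := Module.Finite.iff_addGroup_fg.mp
    (inferInstance : Module.Finite ℤ (AddSubgroup.toIntSubmodule (AddCommGroup.torsion G)))
  exact AddCommGroup.finite_of_fg_isAddTorsion _ AddCommMonoid.addTorsion.isAddTorsion

theorem AddMonoidHom.int_eq_zero_of_mem_of_finite {G : Type*} [AddCommGroup G] (φ : G →+ ℤ)
    (K : AddSubgroup G) [Finite K] {k : G} (hk : k ∈ K) : φ k = 0 :=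
  ((φ.comp K.subtype).isOfFinAddOrder (isOfFinAddOrder_of_finite ⟨k, hk⟩)).eq_zero'

theorem Int.sub_eq_mul_of_forall_add_one_sub_eq {a : ℤ → ℤ} {N : ℤ}
    (h : ∀ n, a (n + 1) - a n = N) (m n : ℤ) : a m - a n = (m - n) * N := by
  have hzero : ∀ n, a n = a 0 + n * N := by
    intro n
    induction n using Int.induction_on with
    | zero => simp
    | succ k ih => linarith [h k]
    | pred k ih =>
      have := h (-k - 1)
      rw [sub_add_cancel] at this
      linarith
  rw [hzero m, hzero n]
  ring

namespace SimpleGraph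

variable {V W : Type*} {Γ : SimpleGraph V}

theorem Reachable.dist_map_le {Γ' : SimpleGraph W} (f : Γ →g Γ') {u v : V}
    (h : Γ.Reachable u v) : Γ'.dist (f u) (f v) ≤ Γ.dist u v := by
  obtain ⟨w, hw⟩ := h.exists_walk_length_eq_dist
  rw [← hw, ← w.length_map f]
  exact dist_le _

theorem Iso.dist_eq {Γ' : SimpleGraph W} (f : Γ ≃g Γ') (u v : V) :
    Γ'.dist (f u) (f v) = Γ.dist u v := by
  by_cases h : Γ.Reachable u v
  · refine le_antisymm (h.dist_map_le f.toHom) ?_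
    simpa using ((Iso.reachable_iff (φ := f)).mpr h).dist_map_le f.symm.toHom
  · rw [dist_eq_zero_of_not_reachable h,
      dist_eq_zero_of_not_reachable (Iso.reachable_iff.not.mpr h)]

variable {f : V → ℤ} {N : ℤ}

theorem Walk.sub_le_mul_length (hf : ∀ u v, Γ.Adj u v → f v - f u ≤ N) {u v : V}
    (w : Γ.Walk u v) : f v - f u ≤ N * w.length := by
  induction w with
  | nil => simp
  | cons h w ih =>
    rw [Walk.length_cons]
    push_cast
    linarith [hf _ _ h]

theorem Reachable.sub_le_mul_dist (hf : ∀ u v, Γ.Adj u v → f v - f u ≤ N) {u v : V}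
    (h : Γ.Reachable u v) : f v - f u ≤ N * Γ.dist u v := by
  obtain ⟨w, hw⟩ := h.exists_walk_length_eq_dist
  exact hw ▸ w.sub_le_mul_length hf

theorem exists_walk_length_eq_of_adj_add_one {γ : ℤ → V} (hγ : ∀ n, Γ.Adj (γ n) (γ (n + 1)))
    (n : ℤ) (k : ℕ) : ∃ w : Γ.Walk (γ n) (γ (n + k)), w.length = k := by
  induction k with
  | zero => exact ⟨Walk.nil.copy rfl (by simp), by simp⟩
  | succ k ih =>
    obtain ⟨w, hw⟩ := ih
    exact ⟨(w.concat (hγ (n + k))).copy rfl (by push_cast; ring_nf), by simp [hw]⟩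

theorem isGeodesicLine_of_height (hN : 0 < N) (hf : ∀ u v, Γ.Adj u v → f v - f u ≤ N)
    {γ : ℤ → V} (hγ : ∀ n, Γ.Adj (γ n) (γ (n + 1)))
    (hstep : ∀ n, f (γ (n + 1)) - f (γ n) = N) : IsGeodesicLine Γ γ := by
  have hforward : ∀ (n : ℤ) (k : ℕ), Γ.dist (γ n) (γ (n + k)) = k := by
    intro n k
    obtain ⟨w, hw⟩ := exists_walk_length_eq_of_adj_add_one hγ n k
    have hlower := w.reachable.sub_le_mul_dist hf
    have hheight := Int.sub_eq_mul_of_forall_add_one_sub_eq (a := f ∘ γ) hstep (n + k) n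
    rw [Function.comp_apply, Function.comp_apply, add_sub_cancel_left] at hheight
    rw [hheight, mul_comm] at hlower
    have := le_of_mul_le_mul_left hlower hN
    exact le_antisymm ((dist_le w).trans hw.le) (by exact_mod_cast this)
  intro j k
  rcases le_total k j with hkj | hjk
  · obtain ⟨t, rfl⟩ := Int.le.dest hkj
    rw [dist_comm, hforward]
    omega
  · obtain ⟨t, rfl⟩ := Int.le.dest hjk
    rw [hforward]
    omega

end SimpleGraph

open SimpleGraph Pointwise

section Cayley

variable {G : Type*} [AddCommGroup G] {S : Set G}

theorem cayley_adj_iff {g h : G} : (cayley S).Adj g h ↔ g ≠ h ∧ h - g ∈ S ∪ -S := by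
  simp [cayley, Set.mem_neg, neg_sub]

def cayleyAddLeft (a : G) : cayley S ≃g cayley S where
  toEquiv := Equiv.addLeft a
  map_rel_iff' := by simp [cayley]

theorem cayley_reachable_iff {x y : G} :
    (cayley S).Reachable x y ↔ (cayley S).Reachable 0 (y - x) := by
  rw [← Iso.reachable_iff (φ := cayleyAddLeft (-x))]
  change (cayley S).Reachable (-x + x) (-x + y) ↔ _
  rw [neg_add_cancel, neg_add_eq_sub]

theorem cayley_connected (hgen : AddSubgroup.closure S = ⊤) : (cayley S).Connected := by
  refine (connected_iff_exists_forall_reachable _).mpr ⟨0, fun g => ?_⟩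
  induction (hgen ▸ AddSubgroup.mem_top g : g ∈ AddSubgroup.closure S)
    using AddSubgroup.closure_induction with
  | mem t ht =>
    by_cases ht0 : t = 0
    · rw [ht0]
    · exact (cayley_adj_iff.mpr ⟨Ne.symm ht0, by simp [ht]⟩).reachable
  | zero => exact Reachable.refl 0
  | add a b _ _ ha hb => exact ha.trans (cayley_reachable_iff.mpr (by simpa using hb))
  | neg a _ ha => exact (cayley_reachable_iff.mpr (by simpa using ha)).symm

noncomputable def wordLength (S : Set G) (g : G) : ℕ := (cayley S).dist 0 g

theorem cayley_dist_eq_wordLength (x y : G) : (cayley S).dist x y = wordLength S (y - x) := by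
  rw [wordLength, ← (cayleyAddLeft (-x)).dist_eq]
  change (cayley S).dist (-x + x) (-x + y) = _
  rw [neg_add_cancel, neg_add_eq_sub]

theorem wordLength_neg (g : G) : wordLength S (-g) = wordLength S g := by
  rw [← zero_sub, ← cayley_dist_eq_wordLength, dist_comm, cayley_dist_eq_wordLength, sub_zero]

theorem wordLength_le_one {t : G} (ht : t ∈ S ∪ -S) : wordLength S t ≤ 1 := by
  by_cases ht0 : t = 0
  · simp [wordLength, ht0]
  · exact (dist_eq_one_iff_adj.mpr (cayley_adj_iff.mpr ⟨Ne.symm ht0, by simpa using ht⟩)).le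

theorem wordLength_add_le (hconn : (cayley S).Connected) (a b : G) :
    wordLength S (a + b) ≤ wordLength S a + wordLength S b := by
  have := hconn.dist_triangle (u := 0) (v := a) (w := a + b)
  rwa [cayley_dist_eq_wordLength a, add_sub_cancel_left] at this

theorem wordLength_sub_le (hconn : (cayley S).Connected) (a b : G) :
    wordLength S (a - b) ≤ wordLength S a + wordLength S b := by
  simpa [sub_eq_add_neg, wordLength_neg] using wordLength_add_le hconn a (-b)

theorem wordLength_sum_le (hconn : (cayley S).Connected) {ι : Type*} (F : Finset ι) (g : ι → G) :
    wordLength S (∑ i ∈ F, g i) ≤ ∑ i ∈ F, wordLength S (g i) :=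
  le_sum_of_subadditive _ (by simp [wordLength]) (wordLength_add_le hconn) F g

theorem wordLength_sum_le_add_mul_card (hconn : (cayley S).Connected) (K : AddSubgroup G)
    [DecidablePred (· ∈ K)] {M L : ℕ} (hM : ∀ k ∈ K, wordLength S k ≤ M) {ι : Type*}
    (F : Finset ι) (g : ι → G) (hL : ∀ i ∈ F, g i ∉ K → wordLength S (g i) ≤ L) :
    wordLength S (∑ i ∈ F, g i) ≤ M + L * #{i ∈ F | g i ∉ K} := by
  rw [← sum_filter_add_sum_filter_not F (fun i => g i ∈ K)]
  calc _ ≤ wordLength S (∑ i ∈ F with g i ∈ K, g i) + wordLength S (∑ i ∈ F with g i ∉ K, g i) :=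
        wordLength_add_le hconn _ _
    _ ≤ M + ∑ i ∈ F with g i ∉ K, wordLength S (g i) :=
        add_le_add (hM _ (sum_mem fun i hi => (mem_filter.mp hi).2)) (wordLength_sum_le hconn _ _)
    _ ≤ M + L * #{i ∈ F | g i ∉ K} := by
        rw [mul_comm, ← smul_eq_mul]
        gcongr
        exact sum_le_card_nsmul _ _ _ fun i hi => hL i (mem_filter.mp hi).1 (mem_filter.mp hi).2

end Cayley

theorem nsmul_sub_sub_eq_sum_range {G : Type*} [AddCommGroup G] (s : G) (q : ℕ → G) (j : ℕ) :
    j • s - (q j - q 0) = ∑ i ∈ range j, (s - (q (i + 1) - q i)) := by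
  rw [sum_sub_distrib, sum_range_sub, sum_const, card_range]

section Height

variable {G : Type*} [AddCommGroup G] {S : Set G} (φ : G →+ ℤ) (K : AddSubgroup G)
  [DecidablePred (· ∈ K)] (s : G)

def offTypeStepCount (p : ℕ → G) (j : ℕ) : ℕ := #{i ∈ range j | s - (p (i + 1) - p i) ∉ K}

theorem cayley_sub_le_mul_dist (hconn : (cayley S).Connected) {N : ℤ}
    (hφ : ∀ t ∈ S ∪ -S, φ t ≤ N) (x y : G) : φ y - φ x ≤ N * (cayley S).dist x y :=
  (hconn x y).sub_le_mul_dist fun u v h => by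
    rw [← map_sub]
    exact hφ _ (cayley_adj_iff.mp h).2

theorem sub_add_offTypeStepCount_le (hφ : ∀ t ∈ S ∪ -S, φ t ≤ φ s)
    (hK : ∀ t ∈ S ∪ -S, φ t = φ s → s - t ∈ K) {p : ℕ → G} {D : ℕ}
    (hp : ∀ i < D, (cayley S).Adj (p i) (p (i + 1))) :
    φ (p D) - φ (p 0) + offTypeStepCount K s p D ≤ D * φ s := by
  have hstep : ∀ i ∈ range D,
      φ (p (i + 1) - p i) + (if s - (p (i + 1) - p i) ∉ K then 1 else 0) ≤ φ s := by
    intro i hi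
    have ht := (cayley_adj_iff.mp (hp i (mem_range.mp hi))).2
    have hle := hφ _ ht
    by_cases hoff : s - (p (i + 1) - p i) ∈ K
    · rw [if_neg (not_not.mpr hoff), add_zero]
      exact hle
    · have : φ (p (i + 1) - p i) ≠ φ s := fun h => hoff (hK _ ht h)
      rw [if_pos hoff]
      omega
  calc φ (p D) - φ (p 0) + offTypeStepCount K s p D
      = ∑ i ∈ range D, (φ (p (i + 1) - p i) + if s - (p (i + 1) - p i) ∉ K then 1 else 0) := by
        rw [sum_add_distrib, ← map_sum, sum_range_sub, map_sub, offTypeStepCount,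
          natCast_card_filter]
    _ ≤ ∑ i ∈ range D, φ s := sum_le_sum hstep
    _ = D * φ s := by simp

theorem offTypeStepCount_le (hconn : (cayley S).Connected) (hs0 : 0 ≤ φ s)
    (hφ : ∀ t ∈ S ∪ -S, φ t ≤ φ s) (hK : ∀ t ∈ S ∪ -S, φ t = φ s → s - t ∈ K)
    {γ : ℤ → G} (hgeo : IsGeodesicLine (cayley S) γ)
    (hγφ : ∀ n, φ (γ (n + 1)) - φ (γ n) = φ s) {c : ℕ} {n m : ℤ} (hnm : n ≤ m) {x y : G}
    (hx : (cayley S).dist x (γ n) ≤ c) (hy : (cayley S).dist y (γ m) ≤ c) {p : ℕ → G}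
    (hp : ∀ i < (cayley S).dist x y, (cayley S).Adj (p i) (p (i + 1))) (hp0 : p 0 = x)
    (hpD : p ((cayley S).dist x y) = y) :
    (offTypeStepCount K s p ((cayley S).dist x y) : ℤ) ≤ 4 * c * φ s := by
  have hcount := sub_add_offTypeStepCount_le φ K s hφ hK hp
  rw [hp0, hpD] at hcount
  have hx' : φ x - φ (γ n) ≤ φ s * c := (cayley_sub_le_mul_dist φ hconn hφ (γ n) x).trans
    (mul_le_mul_of_nonneg_left (by rw [dist_comm]; exact_mod_cast hx) hs0)
  have hy' : φ (γ m) - φ y ≤ φ s * c := (cayley_sub_le_mul_dist φ hconn hφ y (γ m)).trans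
    (mul_le_mul_of_nonneg_left (by exact_mod_cast hy) hs0)
  have hγ := Int.sub_eq_mul_of_forall_add_one_sub_eq (a := φ ∘ γ) hγφ m n
  rw [Function.comp_apply, Function.comp_apply] at hγ
  have hD : ((cayley S).dist x y : ℤ) ≤ 2 * c + (m - n) := by
    have h1 := hconn.dist_triangle (u := x) (v := γ n) (w := y)
    have h2 := hconn.dist_triangle (u := γ n) (v := γ m) (w := y)
    have h3 := hgeo n m
    rw [dist_comm (u := γ m)] at h2
    omega
  have hDN := mul_le_mul_of_nonneg_right hD hs0
  linarith

theorem wordLength_nsmul_sub_le (hconn : (cayley S).Connected) (hs : s ∈ S) {M : ℕ}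
    (hM : ∀ k ∈ K, wordLength S k ≤ M) {p : ℕ → G} {j : ℕ}
    (hp : ∀ i < j, (cayley S).Adj (p i) (p (i + 1))) :
    wordLength S (j • s - (p j - p 0)) ≤ M + 2 * offTypeStepCount K s p j := by
  rw [nsmul_sub_sub_eq_sum_range]
  refine wordLength_sum_le_add_mul_card hconn K hM _ _ fun i hi _ => ?_
  calc wordLength S (s - (p (i + 1) - p i))
      ≤ wordLength S s + wordLength S (p (i + 1) - p i) := wordLength_sub_le hconn _ _
    _ ≤ 1 + 1 := add_le_add (wordLength_le_one (Or.inl hs))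
        (wordLength_le_one (cayley_adj_iff.mp (hp i (mem_range.mp hi))).2)

theorem isQuasiConvexGeodesicLine_of_height [Finite K] (hconn : (cayley S).Connected)
    (hs : s ∈ S) (hs0 : 0 < φ s) (hφ : ∀ t ∈ S ∪ -S, φ t ≤ φ s)
    (hK : ∀ t ∈ S ∪ -S, φ t = φ s → s - t ∈ K) {γ : ℤ → G}
    (hγ : ∀ n, (cayley S).Adj (γ n) (γ (n + 1))) (hγK : ∀ n, s - (γ (n + 1) - γ n) ∈ K) :
    IsQuasiConvexGeodesicLine (cayley S) γ := by
  have hγφ : ∀ n, φ (γ (n + 1)) - φ (γ n) = φ s := fun n => by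
    have := φ.int_eq_zero_of_mem_of_finite K (hγK n)
    rw [map_sub, map_sub] at this
    linarith
  have hgeo : IsGeodesicLine (cayley S) γ := isGeodesicLine_of_height hs0
    (fun u v h => by rw [← map_sub]; exact hφ _ (cayley_adj_iff.mp h).2) hγ hγφ
  obtain ⟨M, hM⟩ : ∃ M, ∀ k ∈ K, wordLength S k ≤ M := by
    obtain ⟨M, hM⟩ := ((K : Set G).toFinite.image (wordLength S)).bddAbove
    exact ⟨M, fun k hk => hM ⟨k, hk, rfl⟩⟩
  refine ⟨hgeo, fun c => ⟨c + 2 * M + 2 * (4 * c * (φ s).toNat), ?_⟩⟩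
  intro n m hnm x y hx hy p hp hp0 hpD j hj
  have hcount := offTypeStepCount_le φ K s hconn hs0.le hφ hK hgeo hγφ hnm hx hy hp.1 hp0 hpD
  have hmono : offTypeStepCount K s p j ≤ offTypeStepCount K s p ((cayley S).dist x y) :=
    card_le_card (filter_subset_filter _ (range_subset_range.mpr hj))
  rw [← Int.toNat_of_nonneg hs0.le] at hcount
  have hoff : offTypeStepCount K s p j ≤ 4 * c * (φ s).toNat :=
    hmono.trans (by exact_mod_cast hcount)
  have hp_dev := wordLength_nsmul_sub_le K s hconn hs hM (j := j) fun i hi => hp.1 i (by omega)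
  have hγ_dev : j • s - (γ (n + j) - γ n) ∈ K := by
    have hsum := nsmul_sub_sub_eq_sum_range s (fun i : ℕ => γ (n + i)) j
    rw [Nat.cast_zero, add_zero] at hsum
    rw [hsum]
    refine sum_mem fun i _ => ?_
    simpa [add_assoc] using hγK (n + i)
  have hx' : wordLength S (γ n - p 0) ≤ c := by rwa [← cayley_dist_eq_wordLength, hp0]
  rw [cayley_dist_eq_wordLength,
    show γ (n + j) - p j = (γ n - p 0) + (j • s - (p j - p 0)) - (j • s - (γ (n + j) - γ n)) by
      abel]
  calc _ ≤ wordLength S (γ n - p 0) + wordLength S (j • s - (p j - p 0)) +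
        wordLength S (j • s - (γ (n + j) - γ n)) :=
      (wordLength_sub_le hconn _ _).trans (by gcongr; exact wordLength_add_le hconn _ _)
    _ ≤ c + (M + 2 * offTypeStepCount K s p j) + M :=
      add_le_add (add_le_add hx' hp_dev) (hM _ hγ_dev)
    _ ≤ c + 2 * M + 2 * (4 * c * (φ s).toNat) := by omega

end Height

theorem quasiAlgebraic_line_quasiConvex_general {G : Type*} [AddCommGroup G] [AddGroup.FG G]
    (S : Set G)
    (hgen : AddSubgroup.closure S = ⊤)
    (d : ℕ) (e : (G ⧸ AddCommGroup.torsion G) ≃+ (Fin d → ℤ))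
    (s : G) (hs : s ∈ S) (hstor : s ∉ AddCommGroup.torsion G)
    (hmax : ∀ t ∈ S,
      ∑ i, (e (QuotientAddGroup.mk' (AddCommGroup.torsion G) t) i) ^ 2 ≤
        ∑ i, (e (QuotientAddGroup.mk' (AddCommGroup.torsion G) s) i) ^ 2)
    (γ : ℤ → G)
    (hγ : IsQuasiAlgebraicLine S (QuotientAddGroup.mk' (AddCommGroup.torsion G) s) γ) :
    IsQuasiConvexGeodesicLine (cayley S) γ := by
  classical
  set π := QuotientAddGroup.mk' (AddCommGroup.torsion G)
  set v := e (π s)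
  let φ : G →+ ℤ := AddMonoidHom.mk' (fun g => e (π g) ⬝ᵥ v) fun a b => by simp [add_dotProduct]
  have hnorm : ∀ t ∈ S ∪ -S, e (π t) ⬝ᵥ e (π t) ≤ v ⬝ᵥ v := by
    rintro t (ht | ht)
    · simpa [dotProduct, sq] using hmax t ht
    · simpa [dotProduct, sq] using hmax (-t) ht
  have hv : v ≠ 0 := by
    simpa [v, π, QuotientAddGroup.eq_zero_iff] using hstor
  have hsub_mem : ∀ t, π s = π t → s - t ∈ AddCommGroup.torsion G := fun t h =>
    QuotientAddGroup.eq_iff_sub_mem.mp h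
  refine isQuasiConvexGeodesicLine_of_height φ (AddCommGroup.torsion G) s (cayley_connected hgen)
    hs ?_ (fun t ht => dotProduct_le_dotProduct_self (hnorm t ht))
    (fun t ht heq => hsub_mem t ?_) hγ.1 fun n => hsub_mem _ (hγ.2 n).symm
  · show 0 < v ⬝ᵥ v
    exact (dotProduct_self_nonneg v).lt_of_ne (Ne.symm (dotProduct_self_eq_zero.not.mpr hv))
  · exact e.injective (eq_of_dotProduct_eq_dotProduct_self (hnorm t ht) heq).symm

/-- Let `G` be a finitely generated Abelian group with symmetric finite generating set
`S`, and equip `G/tors G` with the ℓ²-norm induced by a chosen isomorphism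
`e : G/tors G ≃ ℤ^d`. If `s ∈ S \ tors G` maximizes `‖π_G(·)‖₂` among elements of `S`,
then every quasi-algebraic line of quasi-type `π_G s` in `Cay(G,S)` is a quasi-convex
geodesic line. -/
theorem quasiAlgebraic_line_quasiConvex {G : Type*} [AddCommGroup G] [AddGroup.FG G]
    (S : Set G) (hfin : S.Finite) (hsym : ∀ t ∈ S, -t ∈ S)
    (hgen : AddSubgroup.closure S = ⊤)
    (d : ℕ) (e : (G ⧸ AddCommGroup.torsion G) ≃+ (Fin d → ℤ))
    (s : G) (hs : s ∈ S) (hstor : s ∉ AddCommGroup.torsion G)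
    (hmax : ∀ t ∈ S,
      ∑ i, (e (QuotientAddGroup.mk' (AddCommGroup.torsion G) t) i) ^ 2 ≤
        ∑ i, (e (QuotientAddGroup.mk' (AddCommGroup.torsion G) s) i) ^ 2)
    (γ : ℤ → G)
    (hγ : IsQuasiAlgebraicLine S (QuotientAddGroup.mk' (AddCommGroup.torsion G) s) γ) :
    IsQuasiConvexGeodesicLine (cayley S) γ :=
  quasiAlgebraic_line_quasiConvex_general S hgen d e s hs hstor hmax γ hγ
end

section
/- Let G be a finitely generated Abelian group with rk G = d and |tors G| = k, and let S be a set of elements of G whose images form a ℤ-basis of G/tors G. Then the Cayley graph Cay(G, S ∪ tors G) is isomorphic to the Cartesian (box) product of the Cayley graph Cay(ℤ^d, {e₁, …, e_d}) (standard basis) with the complete graph K_k on k vertices. -/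
/-!
Write `T = tors G` and let `φ : G → ℤ^d` send `g` to the coordinates of its image in `G/T`
in the basis `b`. The map `s : v ↦ ∑ vᵢ • fᵢ` is a section of `φ`, so `(v, t) ↦ s v + t` is a
group isomorphism `ℤ^d × T ≃ G` under which `range f ∪ T` pulls back to
`{(eᵢ, 0)} ∪ ({0} × T)`. A group isomorphism carries Cayley graphs to Cayley graphs, and in a
product group the Cayley graph of such a set is the box product of the two Cayley graphs;
the Cayley graph of all of `T` is the complete graph on `T`.
-/

theorem AddCommGroup.finite_torsion_of_fg (G : Type*) [AddCommGroup G] [AddGroup.FG G] :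
    Finite (AddCommGroup.torsion G) := by
  have : Module.Finite ℤ (Submodule.torsion ℤ G) :=
    Module.Finite.iff_fg.mpr (IsNoetherian.noetherian _)
  rw [← Submodule.torsion_int]
  exact Module.finite_of_fg_torsion _ Submodule.torsion_isTorsion

namespace SimpleGraph

variable {α α' β β' : Type*} {G : SimpleGraph α} {G' : SimpleGraph α'}
  {H : SimpleGraph β} {H' : SimpleGraph β'}

def Iso.boxProdCongr (e₁ : G ≃g G') (e₂ : H ≃g H') : G.boxProd H ≃g G'.boxProd H' where
  toEquiv := e₁.toEquiv.prodCongr e₂.toEquiv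
  map_rel_iff' := by simp [boxProd_adj, e₁.map_adj_iff, e₂.map_adj_iff, e₁.injective.eq_iff,
    e₂.injective.eq_iff]

end SimpleGraph

section Cayley

variable {G H : Type*} [AddCommGroup G] [AddCommGroup H]

theorem cayley_univ : cayley (Set.univ : Set G) = ⊤ := by
  ext g h
  simp [cayley]

theorem cayley_prod_eq_boxProd (A : Set G) (B : Set H) :
    cayley (A ×ˢ {0} ∪ {0} ×ˢ B) = (cayley A).boxProd (cayley B) := by
  ext ⟨g, h⟩ ⟨g', h'⟩
  simp only [cayley, SimpleGraph.boxProd_adj, Set.mem_union, Set.mem_prod, Set.mem_singleton_iff,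
    Prod.fst_sub, Prod.snd_sub, sub_eq_zero, ne_eq, Prod.mk.injEq]
  grind

def AddEquiv.cayleyIso (e : G ≃+ H) (T : Set H) : cayley (e ⁻¹' T) ≃g cayley T where
  toEquiv := e.toEquiv
  map_rel_iff' := by simp [cayley, map_sub]

end Cayley

namespace AddMonoidHom

variable {G H : Type*} [AddCommGroup G] [AddCommGroup H] {φ : G →+ H} {s : H →+ G}
  (hs : Function.LeftInverse φ s) {K : AddSubgroup G} (hK : φ.ker = K)

include hs hK in
theorem bijective_add_of_leftInverse :
    Function.Bijective fun p : H × K => s p.1 + p.2 := by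
  have hφK : ∀ t : K, φ t = 0 := fun t => by rw [← mem_ker, hK]; exact t.2
  constructor
  · rintro ⟨h, t⟩ ⟨h', t'⟩ heq
    have hh : h = h' := by simpa [hs h, hs h', hφK] using congrArg φ heq
    subst hh
    exact Prod.ext rfl (Subtype.ext (add_left_cancel heq))
  · intro g
    have hg : g - s (φ g) ∈ K := by rw [← hK, mem_ker, map_sub, hs (φ g), sub_self]
    exact ⟨(φ g, ⟨_, hg⟩), add_sub_cancel _ _⟩

noncomputable def splitProdAddEquiv : H × K ≃+ G :=
  AddEquiv.ofBijective ((s.comp (fst H K)) + (K.subtype.comp (snd H K)))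
    (bijective_add_of_leftInverse hs hK)

@[simp]
theorem splitProdAddEquiv_apply (p : H × K) : splitProdAddEquiv hs hK p = s p.1 + p.2 := rfl

theorem preimage_splitProdAddEquiv (A : Set H) :
    splitProdAddEquiv hs hK ⁻¹' (s '' A ∪ K) = A ×ˢ {0} ∪ {0} ×ˢ Set.univ := by
  ext ⟨h, t⟩
  have hφK : φ t = 0 := by rw [← mem_ker, hK]; exact t.2
  have hlift : (∃ a ∈ A, s a = s h + t) ↔ h ∈ A ∧ t = 0 := by
    constructor
    · rintro ⟨a, ha, hat⟩
      have hah : a = h := by simpa [hs a, hs h, hφK] using congrArg φ hat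
      subst hah
      exact ⟨ha, Subtype.ext (add_eq_left.mp hat.symm)⟩
    · rintro ⟨ha, rfl⟩
      exact ⟨h, ha, by simp⟩
  have hker : s h + t ∈ K ↔ h = 0 := by
    rw [K.add_mem_cancel_right t.2, ← hK, mem_ker, hs h]
  simp [hlift, hker]

end AddMonoidHom

/-- If `G` is a finitely generated Abelian group with `|tors G| = k`, and `f : Fin d → G`
is a family whose images form a `ℤ`-basis of `G/tors G` (so `rk G = d`), then
`Cay(G, range f ∪ tors G)` is isomorphic to the Cartesian (box) product of
`Cay(ℤ^d, {e₁, …, e_d})` with the complete graph `K_k` on `k` vertices. -/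
theorem cayley_iso_boxProd {G : Type*} [AddCommGroup G] [AddGroup.FG G] (d k : ℕ)
    (hk : Nat.card (AddCommGroup.torsion G) = k)
    (f : Fin d → G) (b : Module.Basis (Fin d) ℤ (G ⧸ AddCommGroup.torsion G))
    (hb : ∀ i, QuotientAddGroup.mk' (AddCommGroup.torsion G) (f i) = b i) :
    Nonempty
      (cayley (Set.range f ∪ (AddCommGroup.torsion G : Set G)) ≃g
        (cayley (Set.range fun i : Fin d => (Pi.single i 1 : Fin d → ℤ))).boxProd
          (⊤ : SimpleGraph (Fin k))) := by
  have := AddCommGroup.finite_torsion_of_fg G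
  let φ : G →+ (Fin d → ℤ) := b.equivFun.toAddMonoidHom.comp (QuotientAddGroup.mk' _)
  let s : (Fin d → ℤ) →+ G := (Fintype.linearCombination ℤ f).toAddMonoidHom
  have hs : Function.LeftInverse φ s := fun v => by
    change b.equivFun (QuotientAddGroup.mk' _ (∑ i, v i • f i)) = v
    rw [map_sum]
    simp_rw [map_zsmul, hb]
    rw [← b.equivFun_symm_apply, LinearEquiv.apply_symm_apply]
  have hker : φ.ker = AddCommGroup.torsion G := by
    ext g
    simp [φ, QuotientAddGroup.eq_zero_iff]
  have hf : Set.range f = s '' Set.range fun i => Pi.single i 1 := by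
    rw [← Set.range_comp]
    congr 1
    ext i
    simp [s]
  let e := AddMonoidHom.splitProdAddEquiv hs hker
  refine ⟨(e.cayleyIso _).symm.trans ?_⟩
  rw [hf, AddMonoidHom.preimage_splitProdAddEquiv, cayley_prod_eq_boxProd, cayley_univ]
  exact SimpleGraph.Iso.boxProdCongr .refl (.completeGraph (Finite.equivFinOfCardEq hk))
end
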